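/- arXiv:2006.06898 — 4 statements merged into one kernel-verified Lean document; each statement's English description precedes it below -/
import Mathlib

section
/- Let K be a field of characteristic zero, let H = (u, v, h) with u, v, h ∈ K[x,y,z], and suppose the Jacobian matrix JH is nilpotent. Let d be the maximum of the z-degrees of u, v, h, and let u_d, v_d ∈ K[x,y] be the coefficients of z^d in u and v respectively. Then the 2×2 matrix with rows (∂u_d/∂x, ∂u_d/∂y) and (∂v_d/∂x, ∂v_d/∂y) is nilpotent. -/
/-!
Over the domain `K[x,y,z]` a nilpotent matrix has characteristic polynomial `X ^ 3`, so both the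
trace of `JH` and the sum of its principal `2 × 2` minors vanish. Differentiating in `x` or `y`
does not raise the `z`-degree, while differentiating in `z` lowers it. Hence the `z^d`-coefficient
of the trace and the `z^(2d)`-coefficient of the minor sum lose every term involving a
`z`-derivative and become the trace and the determinant of the `2 × 2` matrix of the theorem,
which therefore squares to zero by Cayley–Hamilton.
-/

open MvPolynomial

/-- The Jacobian matrix of a polynomial map `H : Kⁿ → Kⁿ`. -/
noncomputable def jacobian {n : ℕ} {K : Type*} [Field K]
    (H : Fin n → MvPolynomial (Fin n) K) :
    Matrix (Fin n) (Fin n) (MvPolynomial (Fin n) K) :=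
  Matrix.of fun i j => pderiv j (H i)

/-- The coefficient of `z^d` (where `z = X 2`) of a polynomial in `K[x,y,z]`,
viewed as an element of `K[x,y] ⊆ K[x,y,z]`. -/
noncomputable def coeffZ {K : Type*} [Field K] (d : ℕ)
    (p : MvPolynomial (Fin 3) K) : MvPolynomial (Fin 3) K :=
  ∑ m ∈ p.support.filter (fun m => m 2 = d),
    monomial (m - Finsupp.single 2 d) (coeff m p)

namespace Matrix

variable {R : Type*} [CommRing R]

theorem charpoly_fin_three (M : Matrix (Fin 3) (Fin 3) R) :
    M.charpoly = Polynomial.X ^ 3 - Polynomial.C M.trace * Polynomial.X ^ 2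
      + Polynomial.C (M 0 0 * M 1 1 - M 0 1 * M 1 0 + M 0 0 * M 2 2 - M 0 2 * M 2 0
          + M 1 1 * M 2 2 - M 1 2 * M 2 1) * Polynomial.X
      - Polynomial.C M.det := by
  simp only [charpoly, det_fin_three, trace_fin_three, charmatrix_apply, diagonal_apply,
    Fin.reduceEq, if_true, if_false, map_add, map_sub, map_mul]
  ring

theorem principal_minors_sum_eq_zero_of_isNilpotent [IsReduced R] {M : Matrix (Fin 3) (Fin 3) R}
    (hM : IsNilpotent M) :
    M 0 0 * M 1 1 - M 0 1 * M 1 0 + M 0 0 * M 2 2 - M 0 2 * M 2 0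
      + M 1 1 * M 2 2 - M 1 2 * M 2 1 = 0 := by
  have h := Polynomial.isNilpotent_iff.mp (isNilpotent_charpoly_sub_pow_of_isNilpotent hM) 1
  simpa [charpoly_fin_three, Polynomial.coeff_X_pow, Polynomial.coeff_C] using h

theorem isNilpotent_of_trace_eq_zero_of_det_eq_zero {M : Matrix (Fin 2) (Fin 2) R}
    (htr : M.trace = 0) (hdet : M.det = 0) : IsNilpotent M := by
  nontriviality R
  refine ⟨2, ?_⟩
  simpa [charpoly_fin_two, htr, hdet] using M.aeval_self_charpoly

end Matrix

theorem Finsupp.tsub_single_eq_iff {σ : Type*} {n m : σ →₀ ℕ} {i : σ} {d : ℕ} (hn : n i = d) :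
    n - Finsupp.single i d = m ↔ m i = 0 ∧ n = m + Finsupp.single i d := by
  constructor
  · rintro rfl
    exact ⟨by simp [hn], (tsub_add_cancel_of_le (Finsupp.single_le_iff.mpr hn.ge)).symm⟩
  · rintro ⟨-, rfl⟩
    exact add_tsub_cancel_right _ _

namespace MvPolynomial

variable {R σ : Type*} [CommSemiring R] {p : MvPolynomial σ R}

theorem add_single_mem_support_of_mem_support_pderiv {i : σ} {m : σ →₀ ℕ}
    (hm : m ∈ (pderiv i p).support) : m + Finsupp.single i 1 ∈ p.support := by
  rw [mem_support_iff, coeff_pderiv] at hm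
  exact mem_support_iff.mpr (left_ne_zero_of_mul hm)

theorem degreeOf_pderiv_le (i j : σ) (p : MvPolynomial σ R) :
    degreeOf j (pderiv i p) ≤ degreeOf j p :=
  degreeOf_le_iff.mpr fun m hm =>
    (le_self_add.trans_eq (Finsupp.add_apply m _ j).symm).trans
      (monomial_le_degreeOf j (add_single_mem_support_of_mem_support_pderiv hm))

theorem degreeOf_pderiv_lt {i : σ} (hp : pderiv i p ≠ 0) :
    degreeOf i (pderiv i p) < degreeOf i p := by
  have hsucc : ∀ m ∈ (pderiv i p).support, m i + 1 ≤ degreeOf i p := fun m hm => by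
    simpa using monomial_le_degreeOf i (add_single_mem_support_of_mem_support_pderiv hm)
  obtain ⟨m, hm⟩ := support_nonempty.mpr hp
  exact (degreeOf_lt_iff (Nat.zero_lt_of_lt (hsucc m hm))).mpr hsucc

end MvPolynomial

section CoeffZ

variable {K : Type*} [Field K] {d e : ℕ} {p q : MvPolynomial (Fin 3) K}

theorem coeff_coeffZ (d : ℕ) (p : MvPolynomial (Fin 3) K) (m : Fin 3 →₀ ℕ) :
    coeff m (coeffZ d p) = if m 2 = 0 then coeff (m + Finsupp.single 2 d) p else 0 := by
  have hterm : ∀ n ∈ p.support.filter (fun n => n 2 = d),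
      coeff m (monomial (n - Finsupp.single 2 d) (coeff n p))
        = if m 2 = 0 then (if m + Finsupp.single 2 d = n then coeff n p else 0) else 0 := by
    intro n hn
    simp only [coeff_monomial, Finsupp.tsub_single_eq_iff (Finset.mem_filter.mp hn).2]
    by_cases hm : m 2 = 0 <;> simp [hm, eq_comm]
  rw [coeffZ, coeff_sum, Finset.sum_congr rfl hterm]
  split_ifs with hm
  · rw [Finset.sum_ite_eq]
    simp +contextual [hm]
  · simp

theorem coeffZ_add (d : ℕ) (p q : MvPolynomial (Fin 3) K) :
    coeffZ d (p + q) = coeffZ d p + coeffZ d q := by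
  ext m
  simp only [coeff_add, coeff_coeffZ]
  split_ifs <;> simp

theorem coeffZ_zero (d : ℕ) : coeffZ d (0 : MvPolynomial (Fin 3) K) = 0 := by
  simp [coeffZ]

theorem coeffZ_sub (d : ℕ) (p q : MvPolynomial (Fin 3) K) :
    coeffZ d (p - q) = coeffZ d p - coeffZ d q :=
  map_sub (AddMonoidHom.mk' (coeffZ d) (coeffZ_add d)) p q

theorem coeffZ_sum {ι : Type*} (d : ℕ) (s : Finset ι) (f : ι → MvPolynomial (Fin 3) K) :
    coeffZ d (∑ i ∈ s, f i) = ∑ i ∈ s, coeffZ d (f i) :=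
  map_sum (AddMonoidHom.mk' (coeffZ d) (coeffZ_add d)) f s

theorem coeffZ_pderiv {i : Fin 3} (hi : i ≠ 2) (d : ℕ) (p : MvPolynomial (Fin 3) K) :
    coeffZ d (pderiv i p) = pderiv i (coeffZ d p) := by
  ext m
  have hm2 : (m + Finsupp.single i 1 : Fin 3 →₀ ℕ) 2 = m 2 := by simp [hi]
  rw [coeff_pderiv, coeff_coeffZ, coeff_coeffZ, hm2]
  split_ifs
  · rw [coeff_pderiv, add_right_comm]
    simp [hi.symm]
  · simp

theorem coeffZ_monomial (d : ℕ) (a : Fin 3 →₀ ℕ) (c : K) :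
    coeffZ d (monomial a c) = if a 2 = d then monomial (a - Finsupp.single 2 d) c else 0 := by
  classical
  by_cases hc : c = 0
  · simp [coeffZ, hc]
  · rw [coeffZ, support_monomial, if_neg hc, Finset.filter_singleton]
    split_ifs <;> simp

theorem coeffZ_monomial_mul_monomial {a b : Fin 3 →₀ ℕ} (ha : a 2 ≤ d) (hb : b 2 ≤ e) (c c' : K) :
    coeffZ (d + e) (monomial a c * monomial b c') =
      coeffZ d (monomial a c) * coeffZ e (monomial b c') := by
  rw [monomial_mul, coeffZ_monomial, coeffZ_monomial, coeffZ_monomial, Finsupp.add_apply]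
  by_cases hde : a 2 = d ∧ b 2 = e
  · have hexp : a + b - Finsupp.single 2 (d + e) =
        (a - Finsupp.single 2 d) + (b - Finsupp.single 2 e) := by
      ext i
      by_cases hi : i = 2
      · subst hi
        simp only [Finsupp.tsub_apply, Finsupp.add_apply, Finsupp.single_eq_same]
        omega
      · simp [Ne.symm hi]
    rw [if_pos (by omega), if_pos hde.1, if_pos hde.2, monomial_mul, hexp]
  · rw [if_neg (by omega)]
    split_ifs <;> simp_all

theorem coeffZ_mul (hp : degreeOf 2 p ≤ d) (hq : degreeOf 2 q ≤ e) :
    coeffZ (d + e) (p * q) = coeffZ d p * coeffZ e q := by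
  have hmonomials := fun a (ha : a ∈ p.support) b (hb : b ∈ q.support) =>
    coeffZ_monomial_mul_monomial (monomial_le_degreeOf 2 ha |>.trans hp)
      (monomial_le_degreeOf 2 hb |>.trans hq) (coeff a p) (coeff b q)
  rw [p.as_sum, q.as_sum, Finset.sum_mul_sum]
  simp only [coeffZ_sum, Finset.sum_mul_sum]
  exact Finset.sum_congr rfl fun a ha => Finset.sum_congr rfl fun b hb => hmonomials a ha b hb

theorem coeffZ_eq_zero_of_degreeOf_lt (h : degreeOf 2 p < d) : coeffZ d p = 0 :=
  Finset.sum_eq_zero fun m hm => by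
    rw [Finset.mem_filter] at hm
    exact absurd (monomial_le_degreeOf 2 hm.1) (by omega)

theorem coeffZ_pderiv_two_eq_zero (h : degreeOf 2 p ≤ d) : coeffZ d (pderiv 2 p) = 0 := by
  by_cases hp : pderiv 2 p = 0
  · rw [hp, coeffZ_zero]
  · exact coeffZ_eq_zero_of_degreeOf_lt ((degreeOf_pderiv_lt hp).trans_le h)

end CoeffZ

theorem stmt5_general (K : Type*) [Field K]
    (u v h : MvPolynomial (Fin 3) K) (d : ℕ)
    (hd : d = max (max (degreeOf 2 u) (degreeOf 2 v)) (degreeOf 2 h))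
    (hnil : IsNilpotent (jacobian ![u, v, h])) :
    IsNilpotent
      (Matrix.of ![![pderiv 0 (coeffZ d u), pderiv 1 (coeffZ d u)],
                    ![pderiv 0 (coeffZ d v), pderiv 1 (coeffZ d v)]]) := by
  have hdu : degreeOf 2 u ≤ d := by omega
  have hdv : degreeOf 2 v ≤ d := by omega
  have hdh : degreeOf 2 h ≤ d := by omega
  have hu (i : Fin 3) : degreeOf 2 (pderiv i u) ≤ d := (degreeOf_pderiv_le i 2 u).trans hdu
  have hv (i : Fin 3) : degreeOf 2 (pderiv i v) ≤ d := (degreeOf_pderiv_le i 2 v).trans hdv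
  have hh (i : Fin 3) : degreeOf 2 (pderiv i h) ≤ d := (degreeOf_pderiv_le i 2 h).trans hdh
  have htrace := (Matrix.isNilpotent_trace_of_isNilpotent hnil).eq_zero
  have hminors := Matrix.principal_minors_sum_eq_zero_of_isNilpotent hnil
  simp only [jacobian, Matrix.trace_fin_three, Matrix.of_apply, Matrix.cons_val] at htrace hminors
  refine Matrix.isNilpotent_of_trace_eq_zero_of_det_eq_zero ?_ ?_
  · have := congrArg (coeffZ d) htrace
    simpa [Matrix.trace_fin_two, coeffZ_add, coeffZ_pderiv, coeffZ_pderiv_two_eq_zero hdh,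
      coeffZ_zero] using this
  · have := congrArg (coeffZ (d + d)) hminors
    simpa [Matrix.det_fin_two_of, coeffZ_add, coeffZ_sub, coeffZ_mul, hu, hv, hh,
      coeffZ_pderiv_two_eq_zero hdu, coeffZ_pderiv_two_eq_zero hdv, coeffZ_pderiv_two_eq_zero hdh,
      coeffZ_zero, coeffZ_pderiv] using this

/-- Let `H = (u, v, h)` have nilpotent Jacobian, let `d` be the
maximum of the `z`-degrees of `u, v, h` and let `u_d, v_d` be the coefficients
of `z^d` in `u` and `v`.  Then the `2×2` matrix `((u_d)_x, (u_d)_y; (v_d)_x, (v_d)_y)`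
is nilpotent.  Variables: `x = X 0`, `y = X 1`, `z = X 2`. -/
theorem stmt5 (K : Type*) [Field K] [CharZero K]
    (u v h : MvPolynomial (Fin 3) K) (d : ℕ)
    (hd : d = max (max (degreeOf 2 u) (degreeOf 2 v)) (degreeOf 2 h))
    (hnil : IsNilpotent (jacobian ![u, v, h])) :
    IsNilpotent
      (Matrix.of ![![pderiv 0 (coeffZ d u), pderiv 1 (coeffZ d u)],
                    ![pderiv 0 (coeffZ d v), pderiv 1 (coeffZ d v)]]) :=
  stmt5_general K u v h d hd hnil
end

section
/- Let K be a field of characteristic zero, let n ≥ 3, and let H be a polynomial map of the form H = (H_1(x_1,...,x_n), H_2(x_1,...,x_n), H_3(x_1,x_2), ..., H_n(x_1,x_2)) where H_2 = b_3 x_3 + ··· + b_n x_n + H_2^{(0)}(x_1,x_2) with b_3,...,b_n ∈ K and H_2^{(0)} ∈ K[x_1,x_2]. Write h_2 = b_3 H_3 + ··· + b_n H_n. If the Jacobian matrix JH is nilpotent, then the following four identities hold (subscripts denote partial derivatives): (i) H_{1x_1} + H_{2x_2} = 0; (ii) (H_{2x_2})^2 + H_{1x_2}H_{2x_1} + H_{1x_3}H_{3x_1}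 + ··· + H_{1x_n}H_{nx_1} + h_{2x_2} = 0; (iii) Σ_{i=3}^{n} H_{1x_i}(H_{2x_1}H_{ix_2} − H_{2x_2}H_{ix_1}) − (H_{1x_1}h_{2x_2} − H_{1x_2}h_{2x_1}) = 0; (iv) Σ_{i=3}^{n} H_{1x_i}(H_{ix_1}h_{2x_2} − H_{ix_2}h_{2x_1}) = 0. -/
open MvPolynomial

/-!
Every row of `JH` below the second is a combination of the coordinate rows `e₁, e₂`, so
`JH = U V` where `V` has rows `∇H₁, ∇H₂, e₁, e₂` and `U` has columns `e₁, e₂` and the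
`x₁`- and `x₂`-derivatives of `H₃, …, Hₙ` (padded by zeros). Since `(VU)^(N+1) = V (UV)^N U`,
the `4 × 4` matrix `VU` is nilpotent as well, and it turns out to be the block companion matrix
`!![A, B; 1, 0]` with `A` the leading `2 × 2` block of `JH` and
`B = !![∑ H_{1xᵢ} H_{ix₁}, ∑ H_{1xᵢ} H_{ix₂}; h_{2x₁}, h_{2x₂}]`; here `h₂` appears because
`H_{2xᵢ} = bᵢ` for `i ≥ 3`. Over the reduced ring `K[x]` a nilpotent matrix has characteristic
polynomial `X⁴`, and the identities (i)–(iv) are the vanishing of the coefficients of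
`X³, X², X, 1` of `det (X² - A X - B)`.
-/

namespace Matrix

theorem isNilpotent_mul_swap {m k R : Type*} [Fintype m] [Fintype k] [DecidableEq m]
    [DecidableEq k] [Semiring R] {U : Matrix m k R} {V : Matrix k m R}
    (h : IsNilpotent (U * V)) : IsNilpotent (V * U) := by
  have pow_succ_swap : ∀ N : ℕ, (V * U) ^ (N + 1) = V * (U * V) ^ N * U := by
    intro N
    induction N with
    | zero => simp
    | succ N ih => rw [pow_succ, ih, pow_succ]; simp only [Matrix.mul_assoc]
  obtain ⟨N, hN⟩ := h
  exact ⟨N + 1, by rw [pow_succ_swap, hN, Matrix.mul_zero, Matrix.zero_mul]⟩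

variable {R : Type*} [CommRing R]

theorem charpoly_eq_X_pow_of_isNilpotent {m : Type*} [Fintype m] [DecidableEq m] [IsReduced R]
    {M : Matrix m m R} (hM : IsNilpotent M) : M.charpoly = Polynomial.X ^ Fintype.card m := by
  rw [← sub_eq_zero]
  ext i
  simpa using
    (Polynomial.isNilpotent_iff.mp (isNilpotent_charpoly_sub_pow_of_isNilpotent hM) i).eq_zero

/-- `!![A, B; 1, 0]` with `2 × 2` blocks `A = !![a, b; c, d]`, `B = !![p, q; r, s]` is the block
companion matrix of `X² - A X - B`, so its characteristic polynomial is `det (X² - A X - B)`. -/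
theorem charpoly_blockCompanion (a b c d p q r s : R) :
    (!![a, b, p, q; c, d, r, s; 1, 0, 0, 0; 0, 1, 0, 0] : Matrix (Fin 4) (Fin 4) R).charpoly =
      Polynomial.X ^ 4 - Polynomial.C (a + d) * Polynomial.X ^ 3
        + Polynomial.C (a * d - b * c - p - s) * Polynomial.X ^ 2
        + Polynomial.C (a * s + d * p - b * r - c * q) * Polynomial.X
        + Polynomial.C (p * s - q * r) := by
  rw [charpoly, det_succ_row_zero]
  simp [Fin.sum_univ_succ, det_fin_three, charmatrix_apply, submatrix, Fin.succAbove]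
  ring

theorem eq_zero_of_isNilpotent_blockCompanion [IsReduced R] {a b c d p q r s : R}
    (hM : IsNilpotent (!![a, b, p, q; c, d, r, s; 1, 0, 0, 0; 0, 1, 0, 0] :
      Matrix (Fin 4) (Fin 4) R)) :
    a + d = 0 ∧ a * d - b * c - p - s = 0 ∧ a * s + d * p - b * r - c * q = 0 ∧
      p * s - q * r = 0 := by
  have h := charpoly_eq_X_pow_of_isNilpotent hM
  rw [charpoly_blockCompanion, Fintype.card_fin] at h
  have h3 := congrArg (Polynomial.coeff · 3) h
  have h2 := congrArg (Polynomial.coeff · 2) h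
  have h1 := congrArg (Polynomial.coeff · 1) h
  have h0 := congrArg (Polynomial.coeff · 0) h
  simp only [Polynomial.coeff_add, Polynomial.coeff_sub, Polynomial.coeff_C_mul_X_pow,
    Polynomial.coeff_C_mul_X, Polynomial.coeff_X_pow, Polynomial.coeff_C] at h3 h2 h1 h0
  norm_num at h3 h2 h1 h0
  exact ⟨by linear_combination -h3, h2, h1, h0⟩

end Matrix

theorem MvPolynomial.pderiv_eq_zero_of_degreeOf_eq_zero {σ R : Type*} [CommSemiring R] {j : σ}
    {p : MvPolynomial σ R} (h : degreeOf j p = 0) : pderiv j p = 0 :=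
  pderiv_eq_zero_of_notMem_vars fun hj => mem_vars_iff_degreeOf_ne_zero.mp hj h

theorem MvPolynomial.pderiv_sum_C_mul_X {σ R : Type*} [CommSemiring R] [DecidableEq σ]
    (b : σ → R) {s : Finset σ} {j : σ} (hj : j ∈ s) :
    pderiv j (∑ i ∈ s, C (b i) * X i) = C (b j) := by
  simp [pderiv_X, Pi.single_apply, hj]

theorem Fin.two_le_iff_ne_zero_and_ne_one {n : ℕ} {i : Fin (n + 3)} :
    2 ≤ (i : ℕ) ↔ i ≠ 0 ∧ i ≠ 1 := by
  simp only [ne_eq, Fin.ext_iff, Fin.val_zero, Fin.val_one]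
  omega

noncomputable section

variable {K : Type*} [Field K] {n : ℕ} (H : Fin (n + 3) → MvPolynomial (Fin (n + 3)) K)

def tailContraction (p : MvPolynomial (Fin (n + 3)) K) (k : Fin (n + 3)) :
    MvPolynomial (Fin (n + 3)) K :=
  ∑ i ∈ Finset.univ.filter (fun i : Fin (n + 3) => 2 ≤ (i : ℕ)), pderiv i p * pderiv k (H i)

def tailPartials (k : Fin (n + 3)) : Fin (n + 3) → MvPolynomial (Fin (n + 3)) K :=
  fun i => if 2 ≤ (i : ℕ) then pderiv k (H i) else 0

def jacobianLeft : Matrix (Fin (n + 3)) (Fin 4) (MvPolynomial (Fin (n + 3)) K) :=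
  Matrix.transpose <| Matrix.of
    ![Pi.single 0 1, Pi.single 1 1, tailPartials H 0, tailPartials H 1]

def jacobianRight : Matrix (Fin 4) (Fin (n + 3)) (MvPolynomial (Fin (n + 3)) K) :=
  Matrix.of ![fun j => pderiv j (H 0), fun j => pderiv j (H 1), Pi.single 0 1, Pi.single 1 1]

theorem jacobian_eq_jacobianLeft_mul_jacobianRight
    (hH : ∀ i j : Fin (n + 3), 2 ≤ (i : ℕ) → 2 ≤ (j : ℕ) → pderiv j (H i) = 0) :
    jacobian H = jacobianLeft H * jacobianRight H := by
  refine Matrix.ext fun i j => ?_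
  simp only [jacobian, jacobianLeft, jacobianRight, tailPartials, Matrix.of_apply,
    Matrix.mul_apply, Matrix.transpose_apply, Matrix.cons_val', Matrix.cons_val_fin_one,
    Matrix.cons_val_zero, Matrix.cons_val_one, Matrix.cons_val, Fin.sum_univ_four, Fin.isValue,
    Pi.single_apply, ite_mul, mul_ite, one_mul, zero_mul, mul_one, mul_zero]
  rcases eq_or_ne i 0 with rfl | hi0
  · simp
  rcases eq_or_ne i 1 with rfl | hi1
  · simp
  have hi : 2 ≤ (i : ℕ) := Fin.two_le_iff_ne_zero_and_ne_one.mpr ⟨hi0, hi1⟩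
  rcases eq_or_ne j 0 with rfl | hj0
  · simp [hi, hi0, hi1]
  rcases eq_or_ne j 1 with rfl | hj1
  · simp [hi, hi0, hi1]
  simp [hi0, hi1, hj0, hj1, hH i j hi (Fin.two_le_iff_ne_zero_and_ne_one.mpr ⟨hj0, hj1⟩)]

theorem pderiv_eq_tailContraction {b : Fin (n + 3) → K}
    (hH1 : ∀ j : Fin (n + 3), 2 ≤ (j : ℕ) → pderiv j (H 1) = C (b j)) (k : Fin (n + 3)) :
    pderiv k (∑ j ∈ Finset.univ.filter (fun j : Fin (n + 3) => 2 ≤ (j : ℕ)), C (b j) * H j) =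
      tailContraction H (H 1) k := by
  rw [map_sum, tailContraction]
  refine Finset.sum_congr rfl fun j hj => ?_
  rw [pderiv_C_mul, hH1 j (Finset.mem_filter.mp hj).2]

theorem jacobianRight_mul_jacobianLeft :
    jacobianRight H * jacobianLeft H =
      !![pderiv 0 (H 0), pderiv 1 (H 0), tailContraction H (H 0) 0, tailContraction H (H 0) 1;
        pderiv 0 (H 1), pderiv 1 (H 1), tailContraction H (H 1) 0, tailContraction H (H 1) 1;
        1, 0, 0, 0; 0, 1, 0, 0] := by
  refine Matrix.ext fun k l => ?_
  fin_cases k <;> fin_cases l <;>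
    simp +contextual [jacobianLeft, jacobianRight, Matrix.mul_apply, tailContraction, tailPartials,
      Finset.sum_filter, Pi.single_apply, Fin.two_le_iff_ne_zero_and_ne_one]

end

/-- Indices are shifted by one: `H 0, H 1, H i` and `X 0, X 1, X i` stand for `H_1, H_2, H_{i+1}`
and `x_1, x_2, x_{i+1}`. -/
theorem stmt9_general (K : Type*) [Field K] (n : ℕ)
    (H : Fin (n + 3) → MvPolynomial (Fin (n + 3)) K)
    (hHtail : ∀ i : Fin (n + 3), 2 ≤ (i : ℕ) →
      ∀ j : Fin (n + 3), 2 ≤ (j : ℕ) → degreeOf j (H i) = 0)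
    (b : Fin (n + 3) → K) (H20 : MvPolynomial (Fin (n + 3)) K)
    (hH20 : ∀ j : Fin (n + 3), 2 ≤ (j : ℕ) → degreeOf j H20 = 0)
    (hH2 : H 1 = (∑ j ∈ Finset.univ.filter (fun j : Fin (n + 3) => 2 ≤ (j : ℕ)),
      C (b j) * X j) + H20)
    (h2 : MvPolynomial (Fin (n + 3)) K)
    (hh2 : h2 = ∑ j ∈ Finset.univ.filter (fun j : Fin (n + 3) => 2 ≤ (j : ℕ)),
      C (b j) * H j)
    (hnil : IsNilpotent (jacobian H)) :
    pderiv 0 (H 0) + pderiv 1 (H 1) = 0 ∧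
    (pderiv 1 (H 1)) ^ 2 + pderiv 1 (H 0) * pderiv 0 (H 1) +
      (∑ i ∈ Finset.univ.filter (fun i : Fin (n + 3) => 2 ≤ (i : ℕ)),
        pderiv i (H 0) * pderiv 0 (H i)) + pderiv 1 h2 = 0 ∧
    (∑ i ∈ Finset.univ.filter (fun i : Fin (n + 3) => 2 ≤ (i : ℕ)),
        pderiv i (H 0) * (pderiv 0 (H 1) * pderiv 1 (H i)
          - pderiv 1 (H 1) * pderiv 0 (H i)))
      - (pderiv 0 (H 0) * pderiv 1 h2 - pderiv 1 (H 0) * pderiv 0 h2) = 0 ∧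
    (∑ i ∈ Finset.univ.filter (fun i : Fin (n + 3) => 2 ≤ (i : ℕ)),
        pderiv i (H 0) * (pderiv 0 (H i) * pderiv 1 h2
          - pderiv 1 (H i) * pderiv 0 h2)) = 0 := by
  have hH1 : ∀ j : Fin (n + 3), 2 ≤ (j : ℕ) → pderiv j (H 1) = C (b j) := fun j hj => by
    rw [hH2, map_add, pderiv_eq_zero_of_degreeOf_eq_zero (hH20 j hj), add_zero,
      pderiv_sum_C_mul_X b (Finset.mem_filter.mpr ⟨Finset.mem_univ j, hj⟩)]
  have hJ := jacobian_eq_jacobianLeft_mul_jacobianRight H fun i j hi hj =>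
    pderiv_eq_zero_of_degreeOf_eq_zero (hHtail i hi j hj)
  have hVU := Matrix.isNilpotent_mul_swap (hJ ▸ hnil)
  rw [jacobianRight_mul_jacobianLeft, ← pderiv_eq_tailContraction H hH1,
    ← pderiv_eq_tailContraction H hH1, ← hh2] at hVU
  obtain ⟨htr, hX2, hX1, hX0⟩ := Matrix.eq_zero_of_isNilpotent_blockCompanion hVU
  have hsum3 : ∑ i ∈ Finset.univ.filter (fun i : Fin (n + 3) => 2 ≤ (i : ℕ)),
      pderiv i (H 0) * (pderiv 0 (H 1) * pderiv 1 (H i) - pderiv 1 (H 1) * pderiv 0 (H i)) =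
      pderiv 0 (H 1) * tailContraction H (H 0) 1 - pderiv 1 (H 1) * tailContraction H (H 0) 0 := by
    simp only [tailContraction, Finset.mul_sum, ← Finset.sum_sub_distrib]
    exact Finset.sum_congr rfl fun i _ => by ring
  have hsum4 : ∑ i ∈ Finset.univ.filter (fun i : Fin (n + 3) => 2 ≤ (i : ℕ)),
      pderiv i (H 0) * (pderiv 0 (H i) * pderiv 1 h2 - pderiv 1 (H i) * pderiv 0 h2) =
      tailContraction H (H 0) 0 * pderiv 1 h2 - tailContraction H (H 0) 1 * pderiv 0 h2 := by
    simp only [tailContraction, Finset.sum_mul, ← Finset.sum_sub_distrib]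
    exact Finset.sum_congr rfl fun i _ => by ring
  refine ⟨htr, ?_, ?_, ?_⟩
  · unfold tailContraction at hX2
    linear_combination pderiv 1 (H 1) * htr - hX2
  · linear_combination hsum3 - hX1
  · linear_combination hsum4 + hX0

/-- (Lemma 3.1.)  Here the dimension is `n + 3` (so `n ≥ 3` in
the notation of the paper), the components of `H` are indexed by `Fin (n+3)`
(`H 0 = H_1`, `H 1 = H_2`, and `H i = H_{i+1}` for `i ≥ 2`), and the variables
`x_1, x_2, x_3, …` are `X 0, X 1, X 2, …`.  The components `H i` for `i ≥ 2`
depend only on `x_1, x_2`; `H 1 = b_3 x_3 + ⋯ + b_n x_n + H_2⁽⁰⁾(x_1,x_2)`;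
`h_2 = b_3 H_3 + ⋯ + b_n H_n`.  If `JH` is nilpotent, then the four stated
identities hold. -/
theorem stmt9 (K : Type*) [Field K] [CharZero K] (n : ℕ)
    (H : Fin (n + 3) → MvPolynomial (Fin (n + 3)) K)
    (hHtail : ∀ i : Fin (n + 3), 2 ≤ (i : ℕ) →
      ∀ j : Fin (n + 3), 2 ≤ (j : ℕ) → degreeOf j (H i) = 0)
    (b : Fin (n + 3) → K) (H20 : MvPolynomial (Fin (n + 3)) K)
    (hH20 : ∀ j : Fin (n + 3), 2 ≤ (j : ℕ) → degreeOf j H20 = 0)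
    (hH2 : H 1 = (∑ j ∈ Finset.univ.filter (fun j : Fin (n + 3) => 2 ≤ (j : ℕ)),
      C (b j) * X j) + H20)
    (h2 : MvPolynomial (Fin (n + 3)) K)
    (hh2 : h2 = ∑ j ∈ Finset.univ.filter (fun j : Fin (n + 3) => 2 ≤ (j : ℕ)),
      C (b j) * H j)
    (hnil : IsNilpotent (jacobian H)) :
    pderiv 0 (H 0) + pderiv 1 (H 1) = 0 ∧
    (pderiv 1 (H 1)) ^ 2 + pderiv 1 (H 0) * pderiv 0 (H 1) +
      (∑ i ∈ Finset.univ.filter (fun i : Fin (n + 3) => 2 ≤ (i : ℕ)),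
        pderiv i (H 0) * pderiv 0 (H i)) + pderiv 1 h2 = 0 ∧
    (∑ i ∈ Finset.univ.filter (fun i : Fin (n + 3) => 2 ≤ (i : ℕ)),
        pderiv i (H 0) * (pderiv 0 (H 1) * pderiv 1 (H i)
          - pderiv 1 (H 1) * pderiv 0 (H i)))
      - (pderiv 0 (H 0) * pderiv 1 h2 - pderiv 1 (H 0) * pderiv 0 h2) = 0 ∧
    (∑ i ∈ Finset.univ.filter (fun i : Fin (n + 3) => 2 ≤ (i : ℕ)),
        pderiv i (H 0) * (pderiv 0 (H i) * pderiv 1 h2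
          - pderiv 1 (H i) * pderiv 0 h2)) = 0 :=
  stmt9_general K n H hHtail b H20 hH20 hH2 h2 hh2 hnil
end

section
/- Let K be a field of characteristic zero and let h̃ = (z + h̃_1(x,y), w + h̃_2(x,y), h̃_3(x,y), h̃_4(x,y)) be a polynomial map in the four variables x, y, z, w, where h̃_1, h̃_2, h̃_3, h̃_4 ∈ K[x,y]. If the Jacobian matrix Jh̃ is nilpotent and the components of h̃ are linearly dependent over K, then there exist T ∈ GL_4(K) and g_1, g_2, g_3 ∈ K[x,y] such that T^{-1} ∘ h̃ ∘ T = (z + g_1(x,y), w + g_2(x,y), g_3(x,y), 0). -/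
open MvPolynomial

/-- The conjugate `T⁻¹ ∘ H ∘ T` of a polynomial map `H` by an invertible
linear map `T ∈ GL_n(K)`, i.e. the polynomial map `x ↦ T⁻¹ · H(T · x)`. -/
noncomputable def conjMap {n : ℕ} {K : Type*} [Field K]
    (T : Matrix.GeneralLinearGroup (Fin n) K)
    (H : Fin n → MvPolynomial (Fin n) K) : Fin n → MvPolynomial (Fin n) K :=
  fun i => ∑ j, C ((↑(T⁻¹) : Matrix (Fin n) (Fin n) K) i j) *
    aeval (fun k => ∑ m, C ((↑T : Matrix (Fin n) (Fin n) K) k m) * X m) (H j)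

/-! The linear part `(z, w, 0, 0)` of `h̃` commutes with `diag(A, A)` for every `A ∈ GL₂(K)`
acting simultaneously on `(x, y)` and on `(z, w)`. Conjugating by it therefore only replaces the
pairs `(h̃₁, h̃₂)` and `(h̃₃, h̃₄)` by their images under `A⁻¹`, after the substitution
`(x, y) ↦ A (x, y)`, and these are still polynomials in `x, y`. Comparing coefficients of `z` and
`w` shows that any linear relation among the components of `h̃` is a relation
`s h̃₃ + t h̃₄ = 0`; choosing `A` so that `(s, t)` is the second row of `A⁻¹` kills the last
component. -/

namespace MvPolynomial

variable {R σ τ : Type*} [CommSemiring R] {s : Set σ} {p : MvPolynomial σ R}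

theorem mem_supported_iff_degreeOf_eq_zero :
    p ∈ supported R s ↔ ∀ i ∉ s, degreeOf i p = 0 := by
  simp only [mem_supported, Set.subset_def, Finset.mem_coe, mem_vars_iff_degreeOf_ne_zero]
  exact forall_congr' fun _ => not_imp_comm

theorem coeff_eq_zero_of_mem_supported {i : σ} {m : σ →₀ ℕ} (hp : p ∈ supported R s)
    (hi : i ∉ s) (hm : m i ≠ 0) : coeff m p = 0 := by
  by_contra h
  exact hi <| mem_supported.mp hp <|
    (mem_vars_iff_mem_support i).mpr ⟨m, mem_support_iff.mpr h, Finsupp.mem_support_iff.mpr hm⟩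

theorem aeval_mem_supported {t : Set τ} {φ : σ → MvPolynomial τ R}
    (hφ : ∀ i ∈ s, φ i ∈ supported R t) (hp : p ∈ supported R s) :
    aeval φ p ∈ supported R t := by
  have hmap : (supported R s).map (aeval φ) ≤ supported R t := by
    rw [supported_eq_adjoin_X, AlgHom.map_adjoin, Algebra.adjoin_le_iff]
    rintro _ ⟨_, ⟨i, hi, rfl⟩, rfl⟩
    simpa using hφ i hi
  exact hmap ⟨p, hp, rfl⟩

theorem mem_supported_zero_one_iff {p : MvPolynomial (Fin 4) R} :
    p ∈ supported R {0, 1} ↔ degreeOf 2 p = 0 ∧ degreeOf 3 p = 0 := by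
  rw [mem_supported_iff_degreeOf_eq_zero]
  refine ⟨fun h => ⟨h 2 (by decide), h 3 (by decide)⟩, fun ⟨h2, h3⟩ i hi => ?_⟩
  obtain rfl | rfl : i = 2 ∨ i = 3 := by fin_cases i <;> simp_all
  exacts [h2, h3]

end MvPolynomial

section BlockDiagonal

variable {R K : Type*} [CommRing R] [Field K]

def blockDiagTwo : Matrix (Fin 2) (Fin 2) R →* Matrix (Fin 4) (Fin 4) R where
  toFun A := !![A 0 0, A 0 1, 0, 0; A 1 0, A 1 1, 0, 0; 0, 0, A 0 0, A 0 1; 0, 0, A 1 0, A 1 1]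
  map_one' := by
    ext i j
    fin_cases i <;> fin_cases j <;> rfl
  map_mul' A B := by
    ext i j
    fin_cases i <;> fin_cases j <;> simp [Matrix.mul_apply, Fin.sum_univ_four, Fin.sum_univ_two]

noncomputable def linSubst {n : ℕ} (T : Matrix (Fin n) (Fin n) K) :
    Fin n → MvPolynomial (Fin n) K :=
  fun k => ∑ m, C (T k m) * X m

theorem conjMap_apply {n : ℕ} (T : GL (Fin n) K) (H : Fin n → MvPolynomial (Fin n) K)
    (i : Fin n) :
    conjMap T H i =
      ∑ j, C ((↑T⁻¹ : Matrix (Fin n) (Fin n) K) i j) * aeval (linSubst ↑T) (H j) :=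
  rfl

theorem linSubst_blockDiagTwo_mem_supported (A : Matrix (Fin 2) (Fin 2) K) :
    ∀ k ∈ ({0, 1} : Set (Fin 4)), linSubst (blockDiagTwo A) k ∈ supported K {0, 1} := by
  have hC (c : K) : C c ∈ supported K ({0, 1} : Set (Fin 4)) := (supported K _).algebraMap_mem c
  have hX (k : Fin 4) (hk : k ∈ ({0, 1} : Set (Fin 4))) :
      X k ∈ supported K ({0, 1} : Set (Fin 4)) :=
    X_mem_supported.mpr hk
  rintro k (rfl | rfl) <;>
    simp only [linSubst, blockDiagTwo, MonoidHom.coe_mk, OneHom.coe_mk, Matrix.of_apply,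
      Matrix.cons_val', Matrix.cons_val_fin_one, Matrix.cons_val_zero, Matrix.cons_val_one,
      Matrix.cons_val, Fin.sum_univ_four, C_0, zero_mul, add_zero] <;>
    exact add_mem (mul_mem (hC _) (hX 0 (by simp))) (mul_mem (hC _) (hX 1 (by simp)))

theorem conjMap_blockDiagTwo_inv (B : GL (Fin 2) K) (h₁ h₂ h₃ h₄ : MvPolynomial (Fin 4) K) :
    let b : Matrix (Fin 2) (Fin 2) K := B
    let ψ := aeval (linSubst (blockDiagTwo (↑B⁻¹ : Matrix (Fin 2) (Fin 2) K)))
    conjMap (Units.map blockDiagTwo B⁻¹) ![X 2 + h₁, X 3 + h₂, h₃, h₄] =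
      ![X 2 + ψ (b 0 0 • h₁ + b 0 1 • h₂), X 3 + ψ (b 1 0 • h₁ + b 1 1 • h₂),
        ψ (b 0 0 • h₃ + b 0 1 • h₄), ψ (b 1 0 • h₃ + b 1 1 • h₄)] := by
  intro b ψ
  obtain ⟨a, ha⟩ : ∃ a, (↑B⁻¹ : Matrix (Fin 2) (Fin 2) K) = a := ⟨_, rfl⟩
  have hba : (↑B : Matrix (Fin 2) (Fin 2) K) * a = 1 := by simp [← ha]
  have hC (i j : Fin 2) : C ((↑B : Matrix (Fin 2) (Fin 2) K) i 0) * C (a 0 j) +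
      C ((↑B : Matrix (Fin 2) (Fin 2) K) i 1) * C (a 1 j) =
      (if i = j then 1 else 0 : MvPolynomial (Fin 4) K) := by
    have := congrFun (congrFun hba i) j
    rw [Matrix.mul_apply, Fin.sum_univ_two, Matrix.one_apply] at this
    rw [← map_mul, ← map_mul, ← map_add, this]
    split_ifs <;> simp
  have hz : ψ (X 2) = C (a 0 0) * X 2 + C (a 0 1) * X 3 := by
    simp [ψ, ha, linSubst, blockDiagTwo, Fin.sum_univ_four]
  have hw : ψ (X 3) = C (a 1 0) * X 2 + C (a 1 1) * X 3 := by
    simp [ψ, ha, linSubst, blockDiagTwo, Fin.sum_univ_four]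
  have hψ : aeval (linSubst ↑(Units.map blockDiagTwo B⁻¹)) = ψ := rfl
  clear_value ψ
  funext i
  rw [conjMap_apply, hψ, Units.coe_map_inv]
  fin_cases i <;>
    simp only [b, blockDiagTwo, inv_inv, MonoidHom.coe_mk, OneHom.coe_mk, Matrix.of_apply,
      Matrix.cons_val', Matrix.cons_val_fin_one, Matrix.cons_val, Matrix.cons_val_one,
      Matrix.cons_val_zero, Fin.sum_univ_four, C_0, map_add, hz, zero_mul, hw, add_zero, zero_add,
      smul_eq_C_mul, map_mul, algHom_C, algebraMap_eq, Fin.isValue, Fin.reduceFinMk, Fin.zero_eta,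
      Fin.mk_one]
  · linear_combination (norm := (simp; ring)) X 2 * hC 0 0 + X 3 * hC 0 1
  · linear_combination (norm := (simp; ring)) X 2 * hC 1 0 + X 3 * hC 1 1

end BlockDiagonal

theorem Matrix.GeneralLinearGroup.exists_row_one_eq {K : Type*} [Field K] {s t : K}
    (hst : ¬(s = 0 ∧ t = 0)) : ∃ B : GL (Fin 2) K,
      (↑B : Matrix (Fin 2) (Fin 2) K) 1 0 = s ∧ (↑B : Matrix (Fin 2) (Fin 2) K) 1 1 = t := by
  by_cases ht : t = 0
  · have hs : s ≠ 0 := fun hs => hst ⟨hs, ht⟩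
    exact ⟨.mkOfDetNeZero !![0, 1; s, t] (by simp [Matrix.det_fin_two, ht, hs]), rfl, rfl⟩
  · exact ⟨.mkOfDetNeZero !![1, 0; s, t] (by simp [Matrix.det_fin_two, ht]), rfl, rfl⟩

theorem not_linearIndependent_pair_of_not_linearIndependent {K : Type*} [Field K]
    {h₁ h₂ h₃ h₄ : MvPolynomial (Fin 4) K}
    (hs : ∀ p ∈ [h₁, h₂, h₃, h₄], p ∈ supported K {0, 1})
    (hdep : ¬ LinearIndependent K ![X 2 + h₁, X 3 + h₂, h₃, h₄]) :
    ¬ LinearIndependent K ![h₃, h₄] := by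
  obtain ⟨g, hg, i, hgi⟩ := Fintype.not_linearIndependent_iff.mp hdep
  have hcoeff (j : Fin 4) (hj : j ∉ ({0, 1} : Set (Fin 4))) :
      ∀ p ∈ [h₁, h₂, h₃, h₄], coeff (Finsupp.single j 1) p = 0 :=
    fun p hp => coeff_eq_zero_of_mem_supported (hs p hp) hj (by simp)
  have hg0 : g 0 = 0 := by
    simpa [Fin.sum_univ_four, coeff_X, hcoeff 2 (by decide), Finsupp.single_eq_single_iff] using
      congrArg (coeff (Finsupp.single 2 1)) hg
  have hg1 : g 1 = 0 := by
    simpa [Fin.sum_univ_four, coeff_X, hcoeff 3 (by decide), Finsupp.single_eq_single_iff] using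
      congrArg (coeff (Finsupp.single 3 1)) hg
  intro hpair
  obtain ⟨hg2, hg3⟩ := LinearIndependent.pair_iff.mp hpair (g 2) (g 3)
    (by simpa [Fin.sum_univ_four, hg0, hg1] using hg)
  fin_cases i <;> simp_all

theorem stmt13_general (K : Type*) [Field K]
    (h₁ h₂ h₃ h₄ : MvPolynomial (Fin 4) K)
    (hxy : ∀ p ∈ [h₁, h₂, h₃, h₄], degreeOf 2 p = 0 ∧ degreeOf 3 p = 0)
    (hdep : ¬ LinearIndependent K ![X 2 + h₁, X 3 + h₂, h₃, h₄]) :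
    ∃ (T : Matrix.GeneralLinearGroup (Fin 4) K)
      (g₁ g₂ g₃ : MvPolynomial (Fin 4) K),
      (∀ p ∈ [g₁, g₂, g₃], degreeOf 2 p = 0 ∧ degreeOf 3 p = 0) ∧
      conjMap T ![X 2 + h₁, X 3 + h₂, h₃, h₄] = ![X 2 + g₁, X 3 + g₂, g₃, 0] := by
  have hs (p) (hp : p ∈ [h₁, h₂, h₃, h₄]) : p ∈ supported K {0, 1} :=
    mem_supported_zero_one_iff.mpr (hxy p hp)
  obtain ⟨s, t, hrel, hst⟩ : ∃ s t : K, s • h₃ + t • h₄ = 0 ∧ ¬(s = 0 ∧ t = 0) := by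
    simpa [LinearIndependent.pair_iff] using
      not_linearIndependent_pair_of_not_linearIndependent hs hdep
  obtain ⟨B, hBs, hBt⟩ := Matrix.GeneralLinearGroup.exists_row_one_eq hst
  have hψ {p} (hp : p ∈ supported K {0, 1}) :
      aeval (linSubst (blockDiagTwo (↑B⁻¹ : Matrix (Fin 2) (Fin 2) K))) p ∈ supported K {0, 1} :=
    aeval_mem_supported (linSubst_blockDiagTwo_mem_supported _) hp
  have hconj := conjMap_blockDiagTwo_inv B h₁ h₂ h₃ h₄
  dsimp only at hconj
  rw [hBs, hBt, hrel, map_zero] at hconj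
  refine ⟨_, _, _, _, ?_, hconj⟩
  simp only [List.mem_cons, List.not_mem_nil, or_false]
  rintro p (rfl | rfl | rfl) <;>
    exact mem_supported_zero_one_iff.mp (hψ (add_mem (Subalgebra.smul_mem _ (hs _ (by simp)) _)
      (Subalgebra.smul_mem _ (hs _ (by simp)) _)))

/-- (Theorem 4.1.)  Variables `x = X 0`, `y = X 1`,
`z = X 2`, `w = X 3`.  Let `h̃ = (z + h̃₁(x,y), w + h̃₂(x,y), h̃₃(x,y), h̃₄(x,y))`.
If `Jh̃` is nilpotent and the components of `h̃` are linearly dependent over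
`K`, then there are `T ∈ GL_4(K)` and `g₁, g₂, g₃ ∈ K[x,y]` with
`T⁻¹ ∘ h̃ ∘ T = (z + g₁(x,y), w + g₂(x,y), g₃(x,y), 0)`. -/
theorem stmt13 (K : Type*) [Field K] [CharZero K]
    (h₁ h₂ h₃ h₄ : MvPolynomial (Fin 4) K)
    (hxy : ∀ p ∈ [h₁, h₂, h₃, h₄], degreeOf 2 p = 0 ∧ degreeOf 3 p = 0)
    (hnil : IsNilpotent (jacobian ![X 2 + h₁, X 3 + h₂, h₃, h₄]))
    (hdep : ¬ LinearIndependent K ![X 2 + h₁, X 3 + h₂, h₃, h₄]) :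
    ∃ (T : Matrix.GeneralLinearGroup (Fin 4) K)
      (g₁ g₂ g₃ : MvPolynomial (Fin 4) K),
      (∀ p ∈ [g₁, g₂, g₃], degreeOf 2 p = 0 ∧ degreeOf 3 p = 0) ∧
      conjMap T ![X 2 + h₁, X 3 + h₂, h₃, h₄] = ![X 2 + g₁, X 3 + g₂, g₃, 0] :=
  stmt13_general K h₁ h₂ h₃ h₄ hxy hdep
end

section
/- Let K be a field of characteristic zero and let h̃ = (z + h̃_1(x,y), w + h̃_2(x,y), h̃_3(x,y), h̃_4(x,y)) be a polynomial map in the four variables x, y, z, w, where h̃_1, h̃_2, h̃_3, h̃_4 ∈ K[x,y]. If the Jacobian matrix Jh̃ is nilpotent, then the two-dimensional polynomial map over the ring K[t] given by ( x + t·h̃_1(x,y) − t²·h̃_3(x,y), y + t·h̃_2(x,y) − t²·h̃_4(x,y) ) is a Keller map, i.e., the determinant of its 2×2 Jacobian matrix with respect to the variables x and y equals 1. -/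
/-!
The Jacobian of `h̃` is the block matrix `N = [[A, 1], [B, 0]]`, where `A` and `B` are the
Jacobians of `(h̃₁, h̃₂)` and `(h̃₃, h̃₄)` in `x, y`. Over a reduced ring the reversed
characteristic polynomial `det (1 - s N)` of a nilpotent matrix is a unit of `R[s]`, hence `1`,
so `det (1 + t N) = 1`. Eliminating the lower right identity block (Schur complement) turns
`det (1 + t N)` into `det (1 + t A - t² B)`, the Jacobian determinant of the map over `K[t]`.
-/

open MvPolynomial

namespace Matrix

open Polynomial

variable {R n : Type*} [CommRing R] [IsReduced R] [Fintype n] [DecidableEq n]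

theorem charpolyRev_eq_one_of_isNilpotent {M : Matrix n n R} (hM : IsNilpotent M) :
    M.charpolyRev = 1 := by
  obtain ⟨-, hcoeff⟩ :=
    isUnit_iff_coeff_isUnit_isNilpotent.mp (isUnit_charpolyRev_of_isNilpotent hM)
  ext i
  rcases eq_or_ne i 0 with rfl | hi
  · simp [coeff_zero_eq_eval_zero]
  · simp [Polynomial.coeff_one, hi, (hcoeff i hi).eq_zero]

theorem det_one_add_eq_one_of_isNilpotent {M : Matrix n n R} (hM : IsNilpotent M) :
    (1 + M).det = 1 := by
  have hmap : (evalRingHom (-1)).mapMatrix (1 - (X : R[X]) • M.map Polynomial.C) = 1 + M := by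
    ext i j
    by_cases hij : i = j <;> simp [hij]
  rw [← hmap, ← RingHom.map_det, ← charpolyRev, charpolyRev_eq_one_of_isNilpotent hM, map_one]

theorem det_one_add_smul_sub_sq_smul_eq_one {A B : Matrix n n R}
    (h : IsNilpotent (fromBlocks A (1 : Matrix n n R) B 0)) (c : R) :
    (1 + c • A - c ^ 2 • B).det = 1 := by
  have hblocks : 1 + c • fromBlocks A (1 : Matrix n n R) B 0 =
      fromBlocks (1 + c • A) (c • 1) (c • B) 1 := by
    rw [fromBlocks_smul, ← fromBlocks_one, fromBlocks_add]; simp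
  have := det_one_add_eq_one_of_isNilpotent (h.smul c)
  rw [hblocks, det_fromBlocks_one₂₂] at this
  simpa [pow_two, smul_smul] using this

end Matrix

namespace MvPolynomial

theorem pderiv_aeval {R A σ τ : Type*} [CommSemiring R] [CommSemiring A]
    [Algebra R A] [Fintype σ] (f : σ → MvPolynomial τ A) (j : τ) (p : MvPolynomial σ R) :
    pderiv j (aeval f p) = ∑ i, aeval f (pderiv i p) * pderiv j (f i) := by
  classical
  induction p using MvPolynomial.induction_on with
  | C a => simp
  | add p q hp hq => simp [hp, hq, add_mul, Finset.sum_add_distrib]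
  | mul_X p k hp =>
    simp [Derivation.leibniz, hp, pderiv_X, Pi.single_apply, apply_ite (aeval f), ite_mul,
      add_mul, Finset.sum_add_distrib, Finset.mul_sum, mul_assoc]

theorem pderiv_eq_zero_of_degreeOf_eq_zero_s14 {R σ : Type*} [CommSemiring R] {i : σ}
    {p : MvPolynomial σ R} (h : degreeOf i p = 0) : pderiv i p = 0 :=
  pderiv_eq_zero_of_notMem_vars fun hi ↦ mem_vars_iff_degreeOf_ne_zero.mp hi h

end MvPolynomial

theorem reindex_jacobian_eq_fromBlocks {K : Type*} [Field K]
    (h₁ h₂ h₃ h₄ : MvPolynomial (Fin 4) K)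
    (hzw : ∀ p ∈ [h₁, h₂, h₃, h₄], pderiv 2 p = 0 ∧ pderiv 3 p = 0) :
    (jacobian ![X 2 + h₁, X 3 + h₂, h₃, h₄]).reindex
        (finSumFinEquiv (m := 2) (n := 2)).symm (finSumFinEquiv (m := 2) (n := 2)).symm =
      Matrix.fromBlocks !![pderiv 0 h₁, pderiv 1 h₁; pderiv 0 h₂, pderiv 1 h₂] 1
        !![pderiv 0 h₃, pderiv 1 h₃; pderiv 0 h₄, pderiv 1 h₄] 0 := by
  simp only [List.mem_cons, List.not_mem_nil, or_false, forall_eq_or_imp, forall_eq] at hzw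
  obtain ⟨⟨hz₁, hw₁⟩, ⟨hz₂, hw₂⟩, ⟨hz₃, hw₃⟩, ⟨hz₄, hw₄⟩⟩ := hzw
  refine Matrix.ext fun i j => ?_
  rcases i with i | i <;> rcases j with j | j <;> fin_cases i <;> fin_cases j <;>
    simp [jacobian, finSumFinEquiv_apply_left (m := 2) (n := 2),
      finSumFinEquiv_apply_right (m := 2) (n := 2), hz₁, hw₁, hz₂, hw₂, hz₃, hw₃, hz₄, hw₄]

theorem stmt14_general (K : Type*) [Field K]
    (h₁ h₂ h₃ h₄ : MvPolynomial (Fin 4) K)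
    (hxy : ∀ p ∈ [h₁, h₂, h₃, h₄], degreeOf 2 p = 0 ∧ degreeOf 3 p = 0)
    (hnil : IsNilpotent (jacobian ![X 2 + h₁, X 3 + h₂, h₃, h₄])) :
    ∀ F₁ F₂ : MvPolynomial (Fin 2) (Polynomial K),
      F₁ = X 0 + C Polynomial.X *
            aeval (R := K) ![X 0, X 1, 0, 0] h₁
          - C Polynomial.X ^ 2 * aeval (R := K) ![X 0, X 1, 0, 0] h₃ →
      F₂ = X 1 + C Polynomial.X *
            aeval (R := K) ![X 0, X 1, 0, 0] h₂
          - C Polynomial.X ^ 2 * aeval (R := K) ![X 0, X 1, 0, 0] h₄ →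
      Matrix.det !![pderiv 0 F₁, pderiv 1 F₁; pderiv 0 F₂, pderiv 1 F₂] = 1 := by
  intro F₁ F₂ hF₁ hF₂
  set φ : MvPolynomial (Fin 4) K →ₐ[K] MvPolynomial (Fin 2) (Polynomial K) :=
    aeval ![X 0, X 1, 0, 0]
  have hφ_pderiv (i : Fin 2) (p : MvPolynomial (Fin 4) K) :
      pderiv i (φ p) = φ (pderiv (Fin.castAdd 2 i) p) := by
    rw [pderiv_aeval, Fin.sum_univ_four]
    fin_cases i <;> simp [φ]
  have hblocks :=
    (hnil.map (Matrix.reindexAlgEquiv K _ (finSumFinEquiv (m := 2) (n := 2)).symm)).map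
      φ.mapMatrix
  rw [Matrix.coe_reindexAlgEquiv, reindex_jacobian_eq_fromBlocks h₁ h₂ h₃ h₄
    fun p hp ↦ (hxy p hp).imp pderiv_eq_zero_of_degreeOf_eq_zero_s14
      pderiv_eq_zero_of_degreeOf_eq_zero_s14, AlgHom.mapMatrix_apply, Matrix.fromBlocks_map,
    Matrix.map_one _ (map_zero φ) (map_one φ), Matrix.map_zero _ (map_zero φ)] at hblocks
  convert Matrix.det_one_add_smul_sub_sq_smul_eq_one hblocks (C Polynomial.X) using 2
  subst hF₁ hF₂
  ext i j
  fin_cases i <;> fin_cases j <;> simp [hφ_pderiv]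

/-- Variables `x = X 0`, `y = X 1`, `z = X 2`, `w = X 3`.
Let `h̃ = (z + h̃₁(x,y), w + h̃₂(x,y), h̃₃(x,y), h̃₄(x,y))` have nilpotent
Jacobian.  Then the two-dimensional polynomial map over `K[t]` given by
`(x + t·h̃₁(x,y) − t²·h̃₃(x,y), y + t·h̃₂(x,y) − t²·h̃₄(x,y))` is a Keller map:
the determinant of its Jacobian matrix with respect to `x, y` equals `1`.
Here polynomials in `x, y` over `K[t]` are elements of
`MvPolynomial (Fin 2) (Polynomial K)` (with `x = X 0`, `y = X 1`,
`t = C Polynomial.X`), and `h̃ᵢ(x,y)` is transported into this ring via the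
substitution `(x, y, z, w) ↦ (x, y, 0, 0)`. -/
theorem stmt14 (K : Type*) [Field K] [CharZero K]
    (h₁ h₂ h₃ h₄ : MvPolynomial (Fin 4) K)
    (hxy : ∀ p ∈ [h₁, h₂, h₃, h₄], degreeOf 2 p = 0 ∧ degreeOf 3 p = 0)
    (hnil : IsNilpotent (jacobian ![X 2 + h₁, X 3 + h₂, h₃, h₄])) :
    ∀ F₁ F₂ : MvPolynomial (Fin 2) (Polynomial K),
      F₁ = X 0 + C Polynomial.X *
            aeval (R := K) ![X 0, X 1, 0, 0] h₁
          - C Polynomial.X ^ 2 * aeval (R := K) ![X 0, X 1, 0, 0] h₃ →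
      F₂ = X 1 + C Polynomial.X *
            aeval (R := K) ![X 0, X 1, 0, 0] h₂
          - C Polynomial.X ^ 2 * aeval (R := K) ![X 0, X 1, 0, 0] h₄ →
      Matrix.det !![pderiv 0 F₁, pderiv 1 F₁; pderiv 0 F₂, pderiv 1 F₂] = 1 :=
  stmt14_general K h₁ h₂ h₃ h₄ hxy hnil
end
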